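/- Let τ and σ be π-compatible topologies on a set X. Then (X, τ) is a Baire space if and only if (X, σ) is a Baire space. -/

import Mathlib

open Topology Set

/-- Topologies `τ` and `σ` on `X` are π-compatible if each is a π-network for the
other: every nonempty open set of either topology contains a nonempty open set of
the other topology. -/
def PiCompatible {X : Type*} (τ σ : TopologicalSpace X) : Prop :=
  (∀ O : Set X, IsOpen[σ] O → O.Nonempty → ∃ V : Set X, IsOpen[τ] V ∧ V.Nonempty ∧ V ⊆ O) ∧
  (∀ O : Set X, IsOpen[τ] O → O.Nonempty → ∃ V : Set X, IsOpen[σ] V ∧ V.Nonempty ∧ V ⊆ O)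

/-!
Every dense open set `U` of `σ` has a dense `τ`-interior: inside `U` the `τ`-interior of `U`
is `σ`-dense (shrink a `σ`-neighbourhood within `U` to a nonempty `τ`-open set), and
`σ`-density passes to `τ`-density since every nonempty `τ`-open set contains a nonempty
`σ`-open one. So a countable family of dense `σ`-open sets yields a family of dense `τ`-open
sets with smaller intersection, which is `τ`-dense by the Baire property of `τ`, hence
`σ`-dense.
-/

def IsPiNetwork {X : Type*} (τ σ : TopologicalSpace X) : Prop :=
  ∀ O : Set X, IsOpen[σ] O → O.Nonempty → ∃ V : Set X, IsOpen[τ] V ∧ V.Nonempty ∧ V ⊆ O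

namespace IsPiNetwork

variable {X : Type*} {τ σ : TopologicalSpace X}

theorem dense {s : Set X} (hτσ : IsPiNetwork τ σ) (hs : @Dense X τ s) : @Dense X σ s := by
  rw [@dense_iff_inter_open X σ]
  intro U hU hUne
  obtain ⟨V, hV, hVne, hVU⟩ := hτσ U hU hUne
  obtain ⟨x, hxV, hxs⟩ := (@dense_iff_inter_open X τ _).mp hs V hV hVne
  exact ⟨x, hVU hxV, hxs⟩

theorem subset_closure_interior {U : Set X} (hτσ : IsPiNetwork τ σ) (hU : IsOpen[σ] U) :
    U ⊆ closure[σ] (@interior X τ U) := by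
  intro x hxU
  rw [@mem_closure_iff X σ]
  intro O hO hxO
  obtain ⟨V, hV, ⟨y, hyV⟩, hVsub⟩ := hτσ (O ∩ U) (@IsOpen.inter X σ _ _ hO hU) ⟨x, hxO, hxU⟩
  have hVU : V ⊆ @interior X τ U :=
    @interior_maximal X τ U V (hVsub.trans inter_subset_right) hV
  exact ⟨y, (hVsub hyV).1, hVU hyV⟩

end IsPiNetwork

namespace PiCompatible

variable {X : Type*} {τ σ : TopologicalSpace X}

theorem symm (h : PiCompatible τ σ) : PiCompatible σ τ := ⟨h.2, h.1⟩

theorem dense_interior {U : Set X} (h : PiCompatible τ σ) (hU : IsOpen[σ] U)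
    (hUd : @Dense X σ U) : @Dense X τ (@interior X τ U) :=
  IsPiNetwork.dense h.2 <| (@dense_closure X σ _).mp <|
    @Dense.mono X σ _ _ (IsPiNetwork.subset_closure_interior h.1 hU) hUd

theorem baireSpace (h : PiCompatible τ σ) [hτ : @BaireSpace X τ] : @BaireSpace X σ := by
  constructor
  intro f hfo hfd
  have hint : @Dense X τ (⋂ n, @interior X τ (f n)) :=
    @BaireSpace.baire_property X τ hτ _ (fun n => @isOpen_interior X τ (f n))
      (fun n => h.dense_interior (hfo n) (hfd n))
  exact @Dense.mono X σ _ _ (iInter_mono fun n => @interior_subset X τ (f n))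
    (IsPiNetwork.dense h.1 hint)

end PiCompatible

theorem stmt_9 {X : Type*} (τ σ : TopologicalSpace X) (h : PiCompatible τ σ) :
    @BaireSpace X τ ↔ @BaireSpace X σ :=
  ⟨fun _ => h.baireSpace, fun _ => h.symm.baireSpace⟩
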